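/- Fix σ₁, σ₂ > 0, α ∈ (0.5, 1), and let R = √2·s. The function h(s) = Φ((σ₂/σ₁)Φ⁻¹(α) + R/σ₁ − s/σ₁) − Φ(−(σ₂/σ₁)Φ⁻¹(α) − R/σ₁ − s/σ₁) is strictly increasing in s for s ≥ 0, and h(s) → 1 as s → ∞. -/

import Mathlib

open MeasureTheory ProbabilityTheory Filter

/-- Standard normal CDF. -/
noncomputable def Phi (t : ℝ) : ℝ := ((gaussianReal 0 1) (Set.Iic t)).toReal

/-- Standard normal quantile function. -/
noncomputable def PhiInv (p : ℝ) : ℝ := sInf {t : ℝ | p ≤ Phi t}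

/-! With `c = (σ₂ / σ₁) Φ⁻¹(α)` and `√2 > 1`, both terms of `h` move in favour of growth: the
upper argument `c + (√2 - 1) s / σ₁` increases to `+∞` while the lower one
`-c - (√2 + 1) s / σ₁` decreases to `-∞`. Strict monotonicity of `Φ` comes from the Gaussian
charging every interval. -/

lemma cdf_gaussianReal_strictMono (m : ℝ) {v : NNReal} (hv : v ≠ 0) :
    StrictMono (cdf (gaussianReal m v)) := by
  intro a b hab
  have hpos : 0 < gaussianReal m v (Set.Ioc a b) := by
    refine pos_iff_ne_zero.2 fun h0 => ?_
    have := gaussianReal_absolutelyContinuous' m hv h0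
    rw [Real.volume_Ioc, ENNReal.ofReal_eq_zero] at this
    linarith
  rwa [← measure_cdf (gaussianReal m v), StieltjesFunction.measure_Ioc, ENNReal.ofReal_pos,
    sub_pos] at hpos

lemma Phi_eq_cdf : Phi = cdf (gaussianReal 0 1) := by
  funext t
  rw [cdf_eq_real]
  rfl

lemma Phi_strictMono : StrictMono Phi :=
  Phi_eq_cdf ▸ cdf_gaussianReal_strictMono 0 one_ne_zero

lemma strictMono_Phi_sub_Phi (c d : ℝ) {a b : ℝ} (ha : 0 < a) (hb : 0 < b) :
    StrictMono fun s => Phi (c + a * s) - Phi (d - b * s) := by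
  intro s t hst
  have hup := Phi_strictMono (show c + a * s < c + a * t by gcongr)
  have hlow := Phi_strictMono (show d - b * t < d - b * s by gcongr)
  dsimp only
  linarith

lemma tendsto_Phi_sub_Phi (c d : ℝ) {a b : ℝ} (ha : 0 < a) (hb : 0 < b) :
    Tendsto (fun s => Phi (c + a * s) - Phi (d - b * s)) atTop (nhds 1) := by
  have hup : Tendsto (fun s => c + a * s) atTop atTop :=
    tendsto_atTop_add_const_left _ c (tendsto_id.const_mul_atTop ha)
  have hlow : Tendsto (fun s => d - b * s) atTop atBot := by
    simp_rw [sub_eq_add_neg, ← neg_mul]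
    exact tendsto_atBot_add_const_left _ d (tendsto_id.const_mul_atTop_of_neg (neg_neg_of_pos hb))
  have hupPhi := (Phi_eq_cdf ▸ tendsto_cdf_atTop (gaussianReal 0 1)).comp hup
  have hlowPhi := (Phi_eq_cdf ▸ tendsto_cdf_atBot (gaussianReal 0 1)).comp hlow
  simpa using hupPhi.sub hlowPhi

theorem stmt10_general (σ₁ σ₂ : ℝ) (hσ₁ : 0 < σ₁)
    (α : ℝ)
    (h : ℝ → ℝ)
    (hh : h = fun s => Phi ((σ₂ / σ₁) * PhiInv α + Real.sqrt 2 * s / σ₁ - s / σ₁) -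
      Phi (-(σ₂ / σ₁) * PhiInv α - Real.sqrt 2 * s / σ₁ - s / σ₁)) :
    StrictMonoOn h (Set.Ici 0) ∧ Tendsto h atTop (nhds 1) := by
  have hsqrt : 1 < Real.sqrt 2 := by
    rw [Real.lt_sqrt zero_le_one]
    norm_num
  have ha : 0 < (Real.sqrt 2 - 1) / σ₁ := div_pos (by linarith) hσ₁
  have hb : 0 < (Real.sqrt 2 + 1) / σ₁ := div_pos (by linarith) hσ₁
  have hh' : h = fun s => Phi (σ₂ / σ₁ * PhiInv α + (Real.sqrt 2 - 1) / σ₁ * s) -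
      Phi (-(σ₂ / σ₁ * PhiInv α) - (Real.sqrt 2 + 1) / σ₁ * s) := by
    rw [hh]
    funext s
    congr 2 <;> ring
  rw [hh']
  exact ⟨(strictMono_Phi_sub_Phi _ _ ha hb).strictMonoOn _, tendsto_Phi_sub_Phi _ _ ha hb⟩

theorem stmt10 (σ₁ σ₂ : ℝ) (hσ₁ : 0 < σ₁) (hσ₂ : 0 < σ₂)
    (α : ℝ) (hα : α ∈ Set.Ioo (1 / 2 : ℝ) 1)
    (h : ℝ → ℝ)
    (hh : h = fun s => Phi ((σ₂ / σ₁) * PhiInv α + Real.sqrt 2 * s / σ₁ - s / σ₁) -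
      Phi (-(σ₂ / σ₁) * PhiInv α - Real.sqrt 2 * s / σ₁ - s / σ₁)) :
    StrictMonoOn h (Set.Ici 0) ∧ Tendsto h atTop (nhds 1) :=
  stmt10_general σ₁ σ₂ hσ₁ α h hh
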